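/- arXiv:1907.12492 — 4 statements merged into one kernel-verified Lean document; each statement's English description precedes it below -/
import Mathlib

section
/- For α, β > -1 and n ≥ 1, define R_n = 2^{2α+2β+4n+2} n! Γ(α+n+1) Γ(β+n+1) Γ(α+β+n+1) / (π (α+β+2n+1) Γ(α+β+2n+1)²). Then R_{n+1}/R_n - 1 = [(α²-β²)² + s² (1 - 2(α²+β²))] / (s²(s²-1)), where s = α+β+2(n+1). -/
open MeasureTheory

set_option maxHeartbeats 2000000 in
/-- The ratio identity for the Jacobi Widom factor sequence `R_n`. -/
theorem stmt_4 (α β : ℝ) (hα : -1 < α) (hβ : -1 < β) (n : ℕ) (hn : 1 ≤ n)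
    (R : ℕ → ℝ)
    (hR : ∀ k : ℕ, R k = 2 ^ (2*α + 2*β + 4*(k:ℝ) + 2) * (Nat.factorial k) *
        Real.Gamma (α + k + 1) * Real.Gamma (β + k + 1) * Real.Gamma (α + β + k + 1) /
        (Real.pi * (α + β + 2*k + 1) * (Real.Gamma (α + β + 2*k + 1)) ^ 2))
    (s : ℝ) (hs : s = α + β + 2*((n:ℝ) + 1)) :
    R (n+1) / R n - 1 =
      ((α^2 - β^2)^2 + s^2 * (1 - 2*(α^2 + β^2))) / (s^2 * (s^2 - 1)) := by
  have hn0 : (0:ℝ) ≤ (n:ℝ) := Nat.cast_nonneg n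
  have hn1 : (1:ℝ) ≤ (n:ℝ) := by exact_mod_cast hn
  have h1 : 0 < α + (n:ℝ) + 1 := by linarith
  have h2 : 0 < β + (n:ℝ) + 1 := by linarith
  have h3 : 0 < α + β + (n:ℝ) + 1 := by linarith
  have h4 : 0 < α + β + 2*(n:ℝ) + 1 := by linarith
  have h5 : 0 < α + β + 2*(n:ℝ) + 2 := by linarith
  have h6 : 0 < α + β + 2*(n:ℝ) + 3 := by linarith
  have hA : Real.Gamma (α + ((n:ℝ)+1) + 1) = (α + n + 1) * Real.Gamma (α + n + 1) := by
    rw [show α + ((n:ℝ)+1) + 1 = (α + n + 1) + 1 by ring, Real.Gamma_add_one h1.ne']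
  have hB : Real.Gamma (β + ((n:ℝ)+1) + 1) = (β + n + 1) * Real.Gamma (β + n + 1) := by
    rw [show β + ((n:ℝ)+1) + 1 = (β + n + 1) + 1 by ring, Real.Gamma_add_one h2.ne']
  have hC : Real.Gamma (α + β + ((n:ℝ)+1) + 1)
      = (α + β + n + 1) * Real.Gamma (α + β + n + 1) := by
    rw [show α + β + ((n:ℝ)+1) + 1 = (α + β + n + 1) + 1 by ring,
      Real.Gamma_add_one h3.ne']
  have hD : Real.Gamma (α + β + 2*((n:ℝ)+1) + 1)
      = (α + β + 2*n + 2) * ((α + β + 2*n + 1) * Real.Gamma (α + β + 2*n + 1)) := by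
    rw [show α + β + 2*((n:ℝ)+1) + 1 = (α + β + 2*n + 2) + 1 by ring,
      Real.Gamma_add_one h5.ne',
      show α + β + 2*(n:ℝ) + 2 = (α + β + 2*n + 1) + 1 by ring,
      Real.Gamma_add_one h4.ne']
  have hpow : (2:ℝ) ^ (2*α + 2*β + 4*((n:ℝ)+1) + 2)
      = 2 ^ (2*α + 2*β + 4*(n:ℝ) + 2) * 16 := by
    rw [show 2*α + 2*β + 4*((n:ℝ)+1) + 2 = (2*α + 2*β + 4*(n:ℝ) + 2) + 4 by ring,
      Real.rpow_add (by norm_num)]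
    norm_num
  have hg1 := Real.Gamma_pos_of_pos h1
  have hg2 := Real.Gamma_pos_of_pos h2
  have hg3 := Real.Gamma_pos_of_pos h3
  have hg4 := Real.Gamma_pos_of_pos h4
  have hfac : (0:ℝ) < (Nat.factorial n : ℝ) := by positivity
  have hpi := Real.pi_pos
  have hp : (0:ℝ) < (2:ℝ) ^ (2*α + 2*β + 4*(n:ℝ) + 2) := Real.rpow_pos_of_pos (by norm_num) _
  have e1 := hR (n+1)
  have e2 := hR n
  rw [Nat.factorial_succ] at e1
  push_cast at e1
  rw [hA, hB, hC, hD, hpow] at e1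
  rw [e1, e2, hs]
  have hS0 : (0:ℝ) < α + β + 2*((n:ℝ)+1) := by linarith
  have hsne : α + β + 2*((n:ℝ)+1) ≠ 0 := hS0.ne'
  have hsq : (α + β + 2*((n:ℝ)+1))^2 - 1 ≠ 0 := by nlinarith
  field_simp
  ring
end

section
/- Let α, β > -1 with |α| + |β| ≥ 1, let n ≥ 1, and let s = α + β + 2(n+1). Then 16(n+1)(α+n+1)(β+n+1)(α+β+n+1) ≤ (α+β+2n+1)(α+β+2n+2)²(α+β+2n+3); equivalently [s² - (α+β)²][s² - (α-β)²] ≤ s²(s² - 1). -/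
/-- When `|α| + |β| ≥ 1` the Jacobi Widom factor ratio is at most one:
`16(n+1)(α+n+1)(β+n+1)(α+β+n+1) ≤ (α+β+2n+1)(α+β+2n+2)²(α+β+2n+3)`,
equivalently `[s²-(α+β)²][s²-(α-β)²] ≤ s²(s²-1)` with `s = α+β+2(n+1)`. -/
theorem stmt_5 (α β : ℝ) (hα : -1 < α) (hβ : -1 < β) (h : 1 ≤ |α| + |β|)
    (n : ℕ) (hn : 1 ≤ n) (s : ℝ) (hs : s = α + β + 2*((n:ℝ) + 1)) :
    16*((n:ℝ)+1)*(α+(n:ℝ)+1)*(β+(n:ℝ)+1)*(α+β+(n:ℝ)+1)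
      ≤ (α+β+2*(n:ℝ)+1)*(α+β+2*(n:ℝ)+2)^2*(α+β+2*(n:ℝ)+3) ∧
    (s^2 - (α+β)^2) * (s^2 - (α-β)^2) ≤ s^2 * (s^2 - 1) := by
  have hn1 : (1:ℝ) ≤ (n:ℝ) := by exact_mod_cast hn
  have ha : |α| ≤ α + 2 := by
    rcases abs_cases α with ⟨h1, _⟩ | ⟨h1, h2⟩ <;> linarith
  have hb : |β| ≤ β + 2 := by
    rcases abs_cases β with ⟨h1, _⟩ | ⟨h1, h2⟩ <;> linarith
  have habs : |α| + |β| ≤ s := by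
    subst hs
    nlinarith [abs_nonneg α, abs_nonneg β]
  have h2 : (α^2 - β^2)^2 ≤ s^2 * (2*α^2 + 2*β^2 - 1) := by
    have hsab : (|α| + |β|)^2 ≤ s^2 := by
      have h0 : (0:ℝ) ≤ |α| + |β| := by positivity
      nlinarith
    have hsq : α^2 = |α|^2 := (sq_abs α).symm
    have hsq' : β^2 = |β|^2 := (sq_abs β).symm
    have hd : (α^2 - β^2)^2 = (|α| - |β|)^2 * (|α| + |β|)^2 := by
      rw [hsq, hsq']; ring
    have h1' : 1 ≤ (|α| + |β|)^2 := by nlinarith [abs_nonneg α, abs_nonneg β]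
    rw [hd, hsq, hsq']
    nlinarith [mul_le_mul_of_nonneg_left hsab (sq_nonneg (|α| - |β|)),
      mul_nonneg (sq_nonneg s) (by linarith : (0:ℝ) ≤ (|α| + |β|)^2 - 1)]
  have key : (s^2 - (α+β)^2) * (s^2 - (α-β)^2) ≤ s^2 * (s^2 - 1) := by
    nlinarith [h2]
  refine ⟨?_, key⟩
  have := key
  subst hs
  nlinarith [this]
end

section
/- Let α, β > -1 with α² + β² ≤ 1/2 and |α| + |β| < 1, let n ≥ 1, and let s = α+β+2(n+1). Then (α²-β²)² + s²(1 - 2(α²+β²)) > 0; equivalently 16(n+1)(α+n+1)(β+n+1)(α+β+n+1) > (α+β+2n+1)(α+β+2n+2)²(α+β+2n+3). -/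
/-- When `α² + β² ≤ 1/2` and `|α| + |β| < 1` the Jacobi Widom factor ratio
is strictly greater than one. -/
theorem stmt_6 (α β : ℝ) (hα : -1 < α) (hβ : -1 < β)
    (h1 : α^2 + β^2 ≤ 1/2) (h2 : |α| + |β| < 1)
    (n : ℕ) (hn : 1 ≤ n) (s : ℝ) (hs : s = α + β + 2*((n:ℝ) + 1)) :
    0 < (α^2 - β^2)^2 + s^2 * (1 - 2*(α^2 + β^2)) ∧
    (α+β+2*(n:ℝ)+1)*(α+β+2*(n:ℝ)+2)^2*(α+β+2*(n:ℝ)+3)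
      < 16*((n:ℝ)+1)*(α+(n:ℝ)+1)*(β+(n:ℝ)+1)*(α+β+(n:ℝ)+1) := by
  have hn1 : (1:ℝ) ≤ (n:ℝ) := by exact_mod_cast hn
  have hs2 : 2 < s := by rw [hs]; linarith
  have habs : α^2 + β^2 + 2*(|α| * |β|) < 1 := by
    nlinarith [sq_abs α, sq_abs β, abs_nonneg α, abs_nonneg β]
  have hab2 : 4*(α^2*β^2) < (1 - (α^2+β^2))^2 := by
    nlinarith [sq_abs α, sq_abs β, abs_nonneg α, abs_nonneg β,
      mul_nonneg (abs_nonneg α) (abs_nonneg β), abs_mul α β, sq_abs (α*β)]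
  have hD : 0 < (α^2 - β^2)^2 + s^2 * (1 - 2*(α^2 + β^2)) := by
    have hf : 0 ≤ (s^2 - 1) * (1 - 2*(α^2+β^2)) :=
      mul_nonneg (by nlinarith) (by linarith)
    nlinarith [hf, hab2]
  refine ⟨hD, ?_⟩
  have key : 16*((n:ℝ)+1)*(α+(n:ℝ)+1)*(β+(n:ℝ)+1)*(α+β+(n:ℝ)+1)
      - (α+β+2*(n:ℝ)+1)*(α+β+2*(n:ℝ)+2)^2*(α+β+2*(n:ℝ)+3)
      = (α^2 - β^2)^2 + s^2 * (1 - 2*(α^2 + β^2)) := by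
    rw [hs]; ring
  linarith
end

section
/- Let 0 < p < ∞ with np < 1 for a fixed positive integer n, let μ_K be the arcsine measure on [-2,2], and let dν(x) = c|x|^{-np} dμ_K(x) with c chosen so ν is a probability measure. Then ∫ |x^n|^p dν(x) = c and exp(∫ log(c|x|^{-np}) dμ_K(x)) = c; in particular ∫|x^n|^p dν ≤ exp(∫ log(dν/dμ_K) dμ_K). -/
/-!
The substitution `x = 2 sin θ` carries `dθ / π` on `(-π/2, π/2)` to the arcsine measure on
`(-2, 2)`. Hence the arcsine measure has mass one, and its logarithmic potential at `0` is
`π⁻¹ ∫ log |2 sin θ| dθ`, which vanishes by `π`-periodicity and `∫₀^π log sin = -π log 2`.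
Off `x = 0` the two integrands reduce to `c` times the density and to
`log c - np log |x|` times the density, so both sides of the inequality equal `c`.
-/

open MeasureTheory Set Real
open scoped Interval

noncomputable def arcsineDensity (x : ℝ) : ℝ := 1 / (π * √(4 - x ^ 2))

lemma image_two_mul_sin_Ioo :
    (fun θ => 2 * sin θ) '' Ioo (-(π / 2)) (π / 2) = Ioo (-2) 2 := by
  ext y
  constructor
  · rintro ⟨θ, ⟨h₁, h₂⟩, rfl⟩
    have hlt : sin θ < 1 := by
      simpa using sin_lt_sin_of_lt_of_le_pi_div_two (by linarith) le_rfl h₂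
    have hgt : -1 < sin θ := by
      simpa using sin_lt_sin_of_lt_of_le_pi_div_two le_rfl (by linarith) h₁
    constructor <;> linarith
  · rintro ⟨h₁, h₂⟩
    refine ⟨arcsin (y / 2), ⟨neg_pi_div_two_lt_arcsin.2 (by linarith),
      arcsin_lt_pi_div_two.2 (by linarith)⟩, ?_⟩
    show 2 * sin (arcsin (y / 2)) = y
    rw [sin_arcsin (by linarith) (by linarith)]
    ring

lemma abs_two_mul_cos_mul_arcsineDensity {θ : ℝ} (hθ : θ ∈ Ioo (-(π / 2)) (π / 2)) :
    |2 * cos θ| * arcsineDensity (2 * sin θ) = π⁻¹ := by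
  have hcos : 0 < 2 * cos θ := by linarith [cos_pos_of_mem_Ioo hθ]
  have hsq : 4 - (2 * sin θ) ^ 2 = (2 * cos θ) ^ 2 := by
    linear_combination (-4) * sin_sq_add_cos_sq θ
  rw [arcsineDensity, hsq, sqrt_sq hcos.le, abs_of_pos hcos]
  field_simp [(cos_pos_of_mem_Ioo hθ).ne']

lemma abs_two_mul_cos_smul_mul_arcsineDensity (g : ℝ → ℝ) {θ : ℝ}
    (hθ : θ ∈ Ioo (-(π / 2)) (π / 2)) :
    |2 * cos θ| • (g (2 * sin θ) * arcsineDensity (2 * sin θ)) = π⁻¹ * g (2 * sin θ) := by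
  rw [smul_eq_mul, mul_left_comm, abs_two_mul_cos_mul_arcsineDensity hθ, mul_comm]

lemma hasDerivWithinAt_two_mul_sin (s : Set ℝ) (θ : ℝ) :
    HasDerivWithinAt (fun θ => 2 * sin θ) (2 * cos θ) s θ :=
  ((hasDerivAt_sin θ).const_mul 2).hasDerivWithinAt

lemma injOn_two_mul_sin : InjOn (fun θ => 2 * sin θ) (Ioo (-(π / 2)) (π / 2)) :=
  fun _ ha _ hb h => injOn_sin (Ioo_subset_Icc_self ha) (Ioo_subset_Icc_self hb)
    (mul_left_cancel₀ two_ne_zero h)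

theorem integral_mul_arcsineDensity (g : ℝ → ℝ) :
    ∫ x in Ioo (-2) 2, g x * arcsineDensity x
      = π⁻¹ * ∫ θ in Ioo (-(π / 2)) (π / 2), g (2 * sin θ) := by
  rw [← image_two_mul_sin_Ioo, integral_image_eq_integral_abs_deriv_smul measurableSet_Ioo
    (fun θ _ => hasDerivWithinAt_two_mul_sin _ θ) injOn_two_mul_sin,
    setIntegral_congr_fun measurableSet_Ioo fun θ => abs_two_mul_cos_smul_mul_arcsineDensity g,
    integral_const_mul]

theorem integrableOn_mul_arcsineDensity_iff (g : ℝ → ℝ) :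
    IntegrableOn (fun x => g x * arcsineDensity x) (Ioo (-2) 2)
      ↔ IntegrableOn (fun θ => g (2 * sin θ)) (Ioo (-(π / 2)) (π / 2)) := by
  rw [← image_two_mul_sin_Ioo, integrableOn_image_iff_integrableOn_abs_deriv_smul measurableSet_Ioo
    (fun θ _ => hasDerivWithinAt_two_mul_sin _ θ) injOn_two_mul_sin,
    integrableOn_congr_fun (fun θ => abs_two_mul_cos_smul_mul_arcsineDensity g) measurableSet_Ioo]
  exact integrable_const_mul_iff (inv_pos.2 pi_pos).ne'.isUnit _

theorem integral_arcsineDensity : ∫ x in Ioo (-2) 2, arcsineDensity x = 1 := by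
  simpa [pi_pos.le, pi_ne_zero] using integral_mul_arcsineDensity fun _ => 1

theorem integrableOn_arcsineDensity : IntegrableOn arcsineDensity (Ioo (-2) 2) := by
  simpa using (integrableOn_mul_arcsineDensity_iff fun _ => 1).2
    (integrableOn_const measure_Ioo_lt_top.ne)

lemma integral_log_two_mul_sin : ∫ θ in -(π / 2)..π / 2, log (2 * sin θ) = 0 := by
  have hper : Function.Periodic (fun θ => log (2 * sin θ)) π := fun θ => by simp [sin_add_pi]
  have hsplit : ∀ᵐ θ, θ ∈ Ι 0 π → log (2 * sin θ) = log 2 + log (sin θ) := by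
    filter_upwards [volume.ae_ne π] with θ hπ hθ
    obtain ⟨h₀, h₁⟩ : θ ∈ Ioc 0 π := uIoc_of_le pi_pos.le ▸ hθ
    exact log_mul two_ne_zero (sin_pos_of_pos_of_lt_pi h₀ (lt_of_le_of_ne h₁ hπ)).ne'
  calc ∫ θ in -(π / 2)..π / 2, log (2 * sin θ)
      = ∫ θ in 0..π, log (2 * sin θ) := by
        simpa [show -(π / 2) + π = π / 2 by ring] using hper.intervalIntegral_add_eq (-(π / 2)) 0
    _ = ∫ θ in 0..π, (log 2 + log (sin θ)) := intervalIntegral.integral_congr_ae hsplit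
    _ = π * log 2 + -log 2 * π := by
        rw [intervalIntegral.integral_add intervalIntegrable_const
            (by exact intervalIntegrable_log_sin),
          intervalIntegral.integral_const, integral_log_sin_zero_pi, smul_eq_mul, sub_zero]
    _ = 0 := by ring

theorem integrableOn_log_mul_arcsineDensity :
    IntegrableOn (fun x => log x * arcsineDensity x) (Ioo (-2) 2) := by
  rw [integrableOn_mul_arcsineDensity_iff, ← intervalIntegrable_iff_integrableOn_Ioo_of_le
    (by linarith [pi_pos])]
  exact (analyticOnNhd_const.mul analyticOnNhd_sin).meromorphicOn.intervalIntegrable_log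

-- `Real.log x = Real.log |x|`: this is the logarithmic potential of the arcsine measure at `0`.
theorem integral_log_mul_arcsineDensity : ∫ x in Ioo (-2) 2, log x * arcsineDensity x = 0 := by
  rw [integral_mul_arcsineDensity, ← integral_Ioc_eq_integral_Ioo,
    ← intervalIntegral.integral_of_le (by linarith [pi_pos]), integral_log_two_mul_sin, mul_zero]

lemma abs_pow_rpow_mul_abs_rpow_neg {x : ℝ} (hx : x ≠ 0) (n : ℕ) (p : ℝ) :
    |x ^ n| ^ p * |x| ^ (-((n : ℝ) * p)) = 1 := by
  rw [abs_pow, ← rpow_natCast, ← rpow_mul (abs_nonneg x), ← rpow_add (abs_pos.2 hx),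
    add_neg_cancel, rpow_zero]

lemma log_mul_abs_rpow {c x : ℝ} (hc : c ≠ 0) (hx : x ≠ 0) (r : ℝ) :
    log (c * |x| ^ r) = log c + r * log x := by
  rw [log_mul hc (rpow_pos_of_pos (abs_pos.2 hx) r).ne', log_rpow (abs_pos.2 hx), log_abs]

theorem stmt_13_general (n : ℕ) (p : ℝ)
    (c : ℝ) (hc : 0 < c) :
    (∫ x in Set.Icc (-2 : ℝ) 2,
        |x ^ n| ^ p * (c * |x| ^ (-((n:ℝ) * p)) * (1 / (Real.pi * Real.sqrt (4 - x ^ 2))))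
      = c) ∧
    (Real.exp (∫ x in Set.Icc (-2 : ℝ) 2,
        Real.log (c * |x| ^ (-((n:ℝ) * p))) * (1 / (Real.pi * Real.sqrt (4 - x ^ 2))))
      = c) ∧
    (∫ x in Set.Icc (-2 : ℝ) 2,
        |x ^ n| ^ p * (c * |x| ^ (-((n:ℝ) * p)) * (1 / (Real.pi * Real.sqrt (4 - x ^ 2))))
      ≤ Real.exp (∫ x in Set.Icc (-2 : ℝ) 2,
        Real.log (c * |x| ^ (-((n:ℝ) * p))) * (1 / (Real.pi * Real.sqrt (4 - x ^ 2))))) := by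
  simp only [← arcsineDensity.eq_1, integral_Icc_eq_integral_Ioo]
  have hmoment : ∫ x in Ioo (-2) 2, |x ^ n| ^ p * (c * |x| ^ (-((n : ℝ) * p)) * arcsineDensity x)
      = c := by
    calc _ = ∫ x in Ioo (-2) 2, c * arcsineDensity x := by
          refine setIntegral_congr_ae measurableSet_Ioo ?_
          filter_upwards [volume.ae_ne 0] with x hx _
          linear_combination c * arcsineDensity x * abs_pow_rpow_mul_abs_rpow_neg hx n p
      _ = c := by rw [integral_const_mul, integral_arcsineDensity, mul_one]
  have hentropy : exp (∫ x in Ioo (-2) 2, log (c * |x| ^ (-((n : ℝ) * p))) * arcsineDensity x)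
      = c := by
    calc _ = exp (∫ x in Ioo (-2) 2,
          (log c * arcsineDensity x + -((n : ℝ) * p) * (log x * arcsineDensity x))) := by
          congr 1
          refine setIntegral_congr_ae measurableSet_Ioo ?_
          filter_upwards [volume.ae_ne 0] with x hx _
          rw [log_mul_abs_rpow hc.ne' hx]
          ring
      _ = c := by
          rw [integral_add (integrableOn_arcsineDensity.const_mul _)
            (integrableOn_log_mul_arcsineDensity.const_mul _), integral_const_mul,
            integral_const_mul, integral_arcsineDensity, integral_log_mul_arcsineDensity,
            mul_zero, add_zero, mul_one, exp_log hc]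
  exact ⟨hmoment, hentropy, (hmoment.trans hentropy.symm).le⟩

/-- For `np < 1` and `dν = c|x|^{-np} dμ_K` a probability measure (μ_K the
arcsine measure on `[-2,2]`), the `L^p` norm of `x^n` and the Szegő entropy of
`ν` both equal `c`; in particular the universal lower bound is attained. -/
theorem stmt_13 (n : ℕ) (hn : 1 ≤ n) (p : ℝ) (hp : 0 < p) (hnp : (n:ℝ) * p < 1)
    (c : ℝ) (hc : 0 < c)
    (hnorm : ∫ x in Set.Icc (-2 : ℝ) 2,
        c * |x| ^ (-((n:ℝ) * p)) * (1 / (Real.pi * Real.sqrt (4 - x ^ 2))) = 1) :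
    (∫ x in Set.Icc (-2 : ℝ) 2,
        |x ^ n| ^ p * (c * |x| ^ (-((n:ℝ) * p)) * (1 / (Real.pi * Real.sqrt (4 - x ^ 2))))
      = c) ∧
    (Real.exp (∫ x in Set.Icc (-2 : ℝ) 2,
        Real.log (c * |x| ^ (-((n:ℝ) * p))) * (1 / (Real.pi * Real.sqrt (4 - x ^ 2))))
      = c) ∧
    (∫ x in Set.Icc (-2 : ℝ) 2,
        |x ^ n| ^ p * (c * |x| ^ (-((n:ℝ) * p)) * (1 / (Real.pi * Real.sqrt (4 - x ^ 2))))
      ≤ Real.exp (∫ x in Set.Icc (-2 : ℝ) 2,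
        Real.log (c * |x| ^ (-((n:ℝ) * p))) * (1 / (Real.pi * Real.sqrt (4 - x ^ 2))))) :=
  stmt_13_general n p c hc
end
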